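/- arXiv:0908.4393 — 2 statements merged into one kernel-verified Lean document; each statement's English description precedes it below -/
import Mathlib

section
/- (Stäckel transform of a 2nd order symmetry) Let H = H₀ + V with H₀ = Σᵢⱼ gⁱʲ(x)pᵢpⱼ, and let K = K₂ + K₀ (K₂ quadratic in momenta, K₀ = W(x) a function of x only) satisfy {K₂, H₀} = 0 and {K₂, V} + {K₀, H₀} = 0. Let U(x) be a nowhere-vanishing particular potential with corresponding zeroth-order part K₀ᵁ satisfying {K₂, U} + {K₀ᵁ, H₀} = 0. Then K̃ = K − (K₀ᵁ/U)·H satisfies {K̃, H/U} = 0. -/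
open Finset

/-- Canonical Poisson bracket on phase space ℝ²ⁿ = (Fin n → ℝ) × (Fin n → ℝ). -/
noncomputable def pb {n : ℕ} (f g : (Fin n → ℝ) × (Fin n → ℝ) → ℝ) :
    (Fin n → ℝ) × (Fin n → ℝ) → ℝ := fun z =>
  ∑ j : Fin n,
    (fderiv ℝ f z ((Pi.single j 1 : Fin n → ℝ), 0) * fderiv ℝ g z (0, (Pi.single j 1 : Fin n → ℝ)) -
     fderiv ℝ f z (0, (Pi.single j 1 : Fin n → ℝ)) * fderiv ℝ g z ((Pi.single j 1 : Fin n → ℝ), 0))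


variable {n : ℕ}


lemma pb_antisymm (f g : (Fin n → ℝ) × (Fin n → ℝ) → ℝ) (z) : pb f g z = - pb g f z := by
  simp only [pb, ← Finset.sum_neg_distrib]
  exact Finset.sum_congr rfl fun j _ => by ring

lemma pb_self (f : (Fin n → ℝ) × (Fin n → ℝ) → ℝ) (z) : pb f f z = 0 := by
  have := pb_antisymm f f z; linarith

lemma pb_add_right (f g h : (Fin n → ℝ) × (Fin n → ℝ) → ℝ) (z)
    (hg : DifferentiableAt ℝ g z) (hh : DifferentiableAt ℝ h z) :
    pb f (fun z => g z + h z) z = pb f g z + pb f h z := by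
  simp only [pb, fderiv_fun_add hg hh, ContinuousLinearMap.add_apply, ← Finset.sum_add_distrib]
  exact Finset.sum_congr rfl fun j _ => by ring

lemma pb_sub_right (f g h : (Fin n → ℝ) × (Fin n → ℝ) → ℝ) (z)
    (hg : DifferentiableAt ℝ g z) (hh : DifferentiableAt ℝ h z) :
    pb f (fun z => g z - h z) z = pb f g z - pb f h z := by
  simp only [pb, fderiv_fun_sub hg hh, ContinuousLinearMap.sub_apply, ← Finset.sum_sub_distrib]
  exact Finset.sum_congr rfl fun j _ => by ring

lemma pb_mul_right (f g h : (Fin n → ℝ) × (Fin n → ℝ) → ℝ) (z)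
    (hg : DifferentiableAt ℝ g z) (hh : DifferentiableAt ℝ h z) :
    pb f (fun z => g z * h z) z = g z * pb f h z + h z * pb f g z := by
  simp only [pb, fderiv_fun_mul hg hh, ContinuousLinearMap.add_apply,
    ContinuousLinearMap.smul_apply, smul_eq_mul, Finset.mul_sum, ← Finset.sum_add_distrib]
  exact Finset.sum_congr rfl fun j _ => by ring

lemma pb_add_left (f g h : (Fin n → ℝ) × (Fin n → ℝ) → ℝ) (z)
    (hf : DifferentiableAt ℝ f z) (hg : DifferentiableAt ℝ g z) :
    pb (fun z => f z + g z) h z = pb f h z + pb g h z := by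
  rw [pb_antisymm, pb_add_right h f g z hf hg, pb_antisymm f h, pb_antisymm g h]; ring

lemma pb_sub_left (f g h : (Fin n → ℝ) × (Fin n → ℝ) → ℝ) (z)
    (hf : DifferentiableAt ℝ f z) (hg : DifferentiableAt ℝ g z) :
    pb (fun z => f z - g z) h z = pb f h z - pb g h z := by
  rw [pb_antisymm, pb_sub_right h f g z hf hg, pb_antisymm f h, pb_antisymm g h]; ring

lemma pb_mul_left (f g h : (Fin n → ℝ) × (Fin n → ℝ) → ℝ) (z)
    (hf : DifferentiableAt ℝ f z) (hg : DifferentiableAt ℝ g z) :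
    pb (fun z => f z * g z) h z = f z * pb g h z + g z * pb f h z := by
  rw [pb_antisymm, pb_mul_right h f g z hf hg, pb_antisymm f h, pb_antisymm g h]; ring

lemma pb_const_right (f : (Fin n → ℝ) × (Fin n → ℝ) → ℝ) (c : ℝ) (z) :
    pb f (fun _ => c) z = 0 := by
  simp [pb]

lemma fderiv_fst_dir (f : (Fin n → ℝ) → ℝ) (z : (Fin n → ℝ) × (Fin n → ℝ))
    (hf : DifferentiableAt ℝ f z.1) (e : Fin n → ℝ) :
    fderiv ℝ (fun z : (Fin n → ℝ) × (Fin n → ℝ) => f z.1) z (0, e) = 0 := by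
  have h : (fun z : (Fin n → ℝ) × (Fin n → ℝ) => f z.1) = f ∘ Prod.fst := rfl
  rw [h, fderiv_comp z hf differentiableAt_fst, fderiv_fst]
  simp

lemma pb_xx (f g : (Fin n → ℝ) → ℝ) (z : (Fin n → ℝ) × (Fin n → ℝ))
    (hf : DifferentiableAt ℝ f z.1) (hg : DifferentiableAt ℝ g z.1) :
    pb (fun z => f z.1) (fun z => g z.1) z = 0 := by
  simp only [pb]
  apply Finset.sum_eq_zero
  intro j _
  rw [fderiv_fst_dir f z hf, fderiv_fst_dir g z hg]
  ring

lemma key (K H0 V U W WU Ui : (Fin n → ℝ) × (Fin n → ℝ) → ℝ)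
    (z : (Fin n → ℝ) × (Fin n → ℝ))
    (dK : DifferentiableAt ℝ K z) (dH0 : DifferentiableAt ℝ H0 z)
    (dV : DifferentiableAt ℝ V z) (dU : DifferentiableAt ℝ U z)
    (dW : DifferentiableAt ℝ W z) (dWU : DifferentiableAt ℝ WU z)
    (dUi : DifferentiableAt ℝ Ui z)
    (h1 : ∀ w, U w * Ui w = 1)
    (z0 : pb W Ui z = 0) (z1 : pb W V z = 0) (z2 : pb V Ui z = 0)
    (z3 : pb WU Ui z = 0) (z4 : pb WU V z = 0) (z5 : pb Ui V z = 0)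
    (hk : pb K H0 z = 0)
    (hsV : pb K V z + pb W H0 z = 0)
    (hsU : pb K U z + pb WU H0 z = 0) :
    pb (fun z => K z + W z - WU z * Ui z * (H0 z + V z))
      (fun z => (H0 z + V z) * Ui z) z = 0 := by
  have h1z : U z * Ui z = 1 := h1 z
  have dS : DifferentiableAt ℝ (fun z => H0 z + V z) z := dH0.add dV
  have dWUUi : DifferentiableAt ℝ (fun z => WU z * Ui z) z := dWU.mul dUi
  -- bracket of K with Ui
  have e1 : pb K (fun z => U z * Ui z) z = 0 := by
    rw [show (fun z => U z * Ui z) = (fun _ => (1:ℝ)) from funext h1]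
    exact pb_const_right K 1 z
  rw [pb_mul_right K U Ui z dU dUi] at e1
  have f4 : pb K Ui z = Ui z * Ui z * pb WU H0 z := by
    linear_combination Ui z * e1 - Ui z * Ui z * hsU - pb K Ui z * h1z
  -- bracket of H0 with Ui
  have e2 : pb H0 (fun z => U z * Ui z) z = 0 := by
    rw [show (fun z => U z * Ui z) = (fun _ => (1:ℝ)) from funext h1]
    exact pb_const_right H0 1 z
  rw [pb_mul_right H0 U Ui z dU dUi] at e2
  have anti : pb H0 U z = - pb U H0 z := pb_antisymm H0 U z
  have f5 : pb H0 Ui z = Ui z * Ui z * pb U H0 z := by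
    linear_combination Ui z * e2 - Ui z * Ui z * anti - pb H0 Ui z * h1z
  -- structural expansion
  have A : pb (fun z => K z + W z - WU z * Ui z * (H0 z + V z))
      (fun z => (H0 z + V z) * Ui z) z
      = pb (fun z => K z + W z) (fun z => (H0 z + V z) * Ui z) z
        - pb (fun z => WU z * Ui z * (H0 z + V z)) (fun z => (H0 z + V z) * Ui z) z :=
    pb_sub_left _ _ _ z (dK.add dW) (dWUUi.mul dS)
  have A2 : pb (fun z => K z + W z) (fun z => (H0 z + V z) * Ui z) z
      = pb K (fun z => (H0 z + V z) * Ui z) z + pb W (fun z => (H0 z + V z) * Ui z) z :=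
    pb_add_left _ _ _ z dK dW
  have g1 : pb K (fun z => (H0 z + V z) * Ui z) z
      = (H0 z + V z) * pb K Ui z + Ui z * pb K (fun z => H0 z + V z) z :=
    pb_mul_right _ _ _ z dS dUi
  have g2 : pb K (fun z => H0 z + V z) z = pb K H0 z + pb K V z :=
    pb_add_right _ _ _ z dH0 dV
  have g3 : pb W (fun z => (H0 z + V z) * Ui z) z
      = (H0 z + V z) * pb W Ui z + Ui z * pb W (fun z => H0 z + V z) z :=
    pb_mul_right _ _ _ z dS dUi
  have g4 : pb W (fun z => H0 z + V z) z = pb W H0 z + pb W V z :=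
    pb_add_right _ _ _ z dH0 dV
  have g5 : pb (fun z => WU z * Ui z * (H0 z + V z)) (fun z => (H0 z + V z) * Ui z) z
      = WU z * Ui z * pb (fun z => H0 z + V z) (fun z => (H0 z + V z) * Ui z) z
        + (H0 z + V z) * pb (fun z => WU z * Ui z) (fun z => (H0 z + V z) * Ui z) z :=
    pb_mul_left _ _ _ z dWUUi dS
  have g6 : pb (fun z => H0 z + V z) (fun z => (H0 z + V z) * Ui z) z
      = (H0 z + V z) * pb (fun z => H0 z + V z) Ui z
        + Ui z * pb (fun z => H0 z + V z) (fun z => H0 z + V z) z :=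
    pb_mul_right _ _ _ z dS dUi
  have g7 : pb (fun z => H0 z + V z) (fun z => H0 z + V z) z = 0 := pb_self _ z
  have g8 : pb (fun z => H0 z + V z) Ui z = pb H0 Ui z + pb V Ui z :=
    pb_add_left _ _ _ z dH0 dV
  have g9 : pb (fun z => WU z * Ui z) (fun z => (H0 z + V z) * Ui z) z
      = (H0 z + V z) * pb (fun z => WU z * Ui z) Ui z
        + Ui z * pb (fun z => WU z * Ui z) (fun z => H0 z + V z) z :=
    pb_mul_right _ _ _ z dS dUi
  have g10 : pb (fun z => WU z * Ui z) Ui z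
      = WU z * pb Ui Ui z + Ui z * pb WU Ui z :=
    pb_mul_left _ _ _ z dWU dUi
  have g11 : pb Ui Ui z = 0 := pb_self _ z
  have g12 : pb (fun z => WU z * Ui z) (fun z => H0 z + V z) z
      = WU z * pb Ui (fun z => H0 z + V z) z + Ui z * pb WU (fun z => H0 z + V z) z :=
    pb_mul_left _ _ _ z dWU dUi
  have g13 : pb Ui (fun z => H0 z + V z) z = pb Ui H0 z + pb Ui V z :=
    pb_add_right _ _ _ z dH0 dV
  have g14 : pb WU (fun z => H0 z + V z) z = pb WU H0 z + pb WU V z :=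
    pb_add_right _ _ _ z dH0 dV
  have antiUiH0 : pb Ui H0 z = - pb H0 Ui z := pb_antisymm Ui H0 z
  rw [A, A2, g1, g2, g3, g4, g5, g6, g7, g8, g9, g10, g11, g12, g13, g14,
    antiUiH0, f4, f5, z0, z1, z2, z3, z4, z5, hk]
  have hKV : pb K V z = - pb W H0 z := by linarith
  rw [hKV]
  ring
/-- Stäckel transform of a 2nd order symmetry: K̃ = K − (K₀ᵁ/U)·H Poisson-commutes with H/U. -/
theorem stmt7 {n : ℕ}
    (g : (Fin n → ℝ) → Fin n → Fin n → ℝ)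
    (v u w wU : (Fin n → ℝ) → ℝ)
    (K₂ : (Fin n → ℝ) × (Fin n → ℝ) → ℝ)
    (hg : ∀ i j, ContDiff ℝ (⊤ : ℕ∞) fun x => g x i j)
    (hv : ContDiff ℝ (⊤ : ℕ∞) v) (hu : ContDiff ℝ (⊤ : ℕ∞) u)
    (hw : ContDiff ℝ (⊤ : ℕ∞) w) (hwU : ContDiff ℝ (⊤ : ℕ∞) wU)
    (hK₂ : ContDiff ℝ (⊤ : ℕ∞) K₂)
    (hune : ∀ x, u x ≠ 0)
    (hhom : ∀ (x p : Fin n → ℝ) (a : ℝ), K₂ (x, a • p) = a ^ 2 * K₂ (x, p))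
    (hkill : ∀ z, pb K₂ (fun z => ∑ i : Fin n, ∑ j : Fin n, g z.1 i j * z.2 i * z.2 j) z = 0)
    (hsymV : ∀ z, pb K₂ (fun z => v z.1) z
      + pb (fun z => w z.1) (fun z => ∑ i : Fin n, ∑ j : Fin n, g z.1 i j * z.2 i * z.2 j) z = 0)
    (hsymU : ∀ z, pb K₂ (fun z => u z.1) z
      + pb (fun z => wU z.1) (fun z => ∑ i : Fin n, ∑ j : Fin n, g z.1 i j * z.2 i * z.2 j) z = 0) :
    ∀ z, pb
      (fun z => K₂ z + w z.1
        - (wU z.1 / u z.1) * ((∑ i : Fin n, ∑ j : Fin n, g z.1 i j * z.2 i * z.2 j) + v z.1))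
      (fun z => ((∑ i : Fin n, ∑ j : Fin n, g z.1 i j * z.2 i * z.2 j) + v z.1) / u z.1) z = 0 := by
  intro z
  simp only [div_eq_mul_inv]
  have cH0 : ContDiff ℝ (⊤ : ℕ∞) (fun z : (Fin n → ℝ) × (Fin n → ℝ) =>
      ∑ i : Fin n, ∑ j : Fin n, g z.1 i j * z.2 i * z.2 j) := by
    apply ContDiff.sum; intro i _
    apply ContDiff.sum; intro j _
    exact (((hg i j).comp contDiff_fst).mul
      ((ContinuousLinearMap.proj i : (Fin n → ℝ) →L[ℝ] ℝ).contDiff.comp contDiff_snd)).mul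
      ((ContinuousLinearMap.proj j : (Fin n → ℝ) →L[ℝ] ℝ).contDiff.comp contDiff_snd)
  have cUi : ContDiff ℝ (⊤ : ℕ∞) (fun z : (Fin n → ℝ) × (Fin n → ℝ) => (u z.1)⁻¹) :=
    (hu.comp contDiff_fst).inv fun z => hune z.1
  have dAtBase : ∀ (f : (Fin n → ℝ) → ℝ), ContDiff ℝ (⊤ : ℕ∞) f → DifferentiableAt ℝ f z.1 :=
    fun f hf => (hf.differentiable (by simp)).differentiableAt
  have duinv : DifferentiableAt ℝ (fun x => (u x)⁻¹) z.1 :=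
    (dAtBase u hu).inv (hune z.1)
  exact key K₂ (fun z => ∑ i : Fin n, ∑ j : Fin n, g z.1 i j * z.2 i * z.2 j)
    (fun z => v z.1) (fun z => u z.1) (fun z => w z.1) (fun z => wU z.1)
    (fun z => (u z.1)⁻¹) z
    ((hK₂.differentiable (by simp)).differentiableAt)
    ((cH0.differentiable (by simp)).differentiableAt)
    (((hv.comp contDiff_fst).differentiable (by simp)).differentiableAt)
    (((hu.comp contDiff_fst).differentiable (by simp)).differentiableAt)
    (((hw.comp contDiff_fst).differentiable (by simp)).differentiableAt)
    (((hwU.comp contDiff_fst).differentiable (by simp)).differentiableAt)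
    ((cUi.differentiable (by simp)).differentiableAt)
    (fun z => mul_inv_cancel₀ (hune z.1))
    (pb_xx w (fun x => (u x)⁻¹) z (dAtBase w hw) duinv)
    (pb_xx w v z (dAtBase w hw) (dAtBase v hv))
    (pb_xx v (fun x => (u x)⁻¹) z (dAtBase v hv) duinv)
    (pb_xx wU (fun x => (u x)⁻¹) z (dAtBase wU hwU) duinv)
    (pb_xx wU v z (dAtBase wU hwU) (dAtBase v hv))
    (pb_xx (fun x => (u x)⁻¹) v z duinv (dAtBase v hv))
    (hkill z) (hsymV z) (hsymU z)
end

section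
/- Let H = p₁² + p₂² + a(x₁²+x₂²) + b(x₁²+x₂²)/(x₁²−x₂²)² + c(x₁²+x₂²)/(x₁²x₂²) on the open set where x₁x₂(x₁²−x₂²) ≠ 0. Then K₂ = (x₁p₂ − x₂p₁)² + 4b x₁²x₂²/(x₁²−x₂²)² + c(x₁⁴+x₂⁴)/(x₁²x₂²) Poisson-commutes with H. -/
open Finset

/-!
Write `L = x₁p₂ − x₂p₁`, `K = L² + U(x)` and `H = |p|² + V(x)`. Since `L²` commutes with `|p|²`
and `U`, `V` depend on `x` only, `{K, H} = 2 p·∇U + 2L (x₂ ∂₁V − x₁ ∂₂V)`, which vanishes for all `p`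
as soon as `∇U = (x₂, −x₁) (x₂ ∂₁V − x₁ ∂₂V)`. For the two potentials of the theorem this relation
is an identity between rational functions on the open set where they are defined.
-/

section

variable {𝕜 E : Type*} [NontriviallyNormedField 𝕜] [NormedAddCommGroup E] [NormedSpace 𝕜 E]
  {f g : E → 𝕜} {f' g' : E →L[𝕜] 𝕜} {x : E}

theorem HasFDerivAt.div (hf : HasFDerivAt f f' x) (hg : HasFDerivAt g g' x) (hx : g x ≠ 0) :
    HasFDerivAt (fun y => f y / g y) ((g x ^ 2)⁻¹ • (g x • f' - f x • g')) x := by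
  simp only [div_eq_mul_inv]
  refine (hf.mul ((hasDerivAt_inv hx).comp_hasFDerivAt x hg)).congr_fderiv ?_
  refine ContinuousLinearMap.ext fun v => ?_
  simp only [Function.comp_apply, add_apply, smul_apply, smul_eq_mul, neg_mul, mul_neg, sub_apply]
  field_simp
  ring

end

theorem pb_eq_of_hasFDerivAt {n : ℕ} {f g : (Fin n → ℝ) × (Fin n → ℝ) → ℝ}
    {f' g' : (Fin n → ℝ) × (Fin n → ℝ) →L[ℝ] ℝ} {z : (Fin n → ℝ) × (Fin n → ℝ)}
    (hf : HasFDerivAt f f' z) (hg : HasFDerivAt g g' z) :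
    pb f g z = ∑ j, (f' (Pi.single j 1, 0) * g' (0, Pi.single j 1)
      - f' (0, Pi.single j 1) * g' (Pi.single j 1, 0)) := by
  simp only [pb, hf.fderiv, hg.fderiv]

section

open ContinuousLinearMap

theorem pb_angMom_sq_add_potential {U V : (Fin 2 → ℝ) → ℝ} {z : (Fin 2 → ℝ) × (Fin 2 → ℝ)}
    {dU₀ dU₁ dV₀ dV₁ : ℝ}
    (hU : HasFDerivAt U (dU₀ • proj 0 + dU₁ • proj 1 : (Fin 2 → ℝ) →L[ℝ] ℝ) z.1)
    (hV : HasFDerivAt V (dV₀ • proj 0 + dV₁ • proj 1 : (Fin 2 → ℝ) →L[ℝ] ℝ) z.1) :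
    pb (fun z => (z.1 0 * z.2 1 - z.1 1 * z.2 0) ^ 2 + U z.1)
        (fun z => z.2 0 ^ 2 + z.2 1 ^ 2 + V z.1) z
      = 2 * (z.2 0 * dU₀ + z.2 1 * dU₁)
        + 2 * (z.1 0 * z.2 1 - z.1 1 * z.2 0) * (z.1 1 * dV₀ - z.1 0 * dV₁) := by
  have hx (i : Fin 2) := (hasFDerivAt_apply (𝕜 := ℝ) i z.1).comp z hasFDerivAt_fst
  have hp (i : Fin 2) := (hasFDerivAt_apply (𝕜 := ℝ) i z.2).comp z hasFDerivAt_snd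
  have hK := (((hx 0).mul (hp 1)).sub ((hx 1).mul (hp 0))).pow 2 |>.add (hU.comp z hasFDerivAt_fst)
  have hH := (((hp 0).pow 2).add ((hp 1).pow 2)).add (hV.comp z hasFDerivAt_fst)
  refine (pb_eq_of_hasFDerivAt hK hH).trans ?_
  simp only [Fin.isValue, Pi.sub_apply, Pi.mul_apply, Function.comp_apply, Nat.add_one_sub_one, pow_one,
    nsmul_eq_mul, Nat.cast_ofNat, add_comp, smul_comp, add_apply, smul_apply, sub_apply, comp_apply, coe_snd',
    proj_apply, Pi.zero_apply, smul_eq_mul, mul_zero, coe_fst', zero_add, add_zero, sum_sub_distrib, Fin.sum_univ_two,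
    Pi.single_eq_same, mul_one, ne_eq, one_ne_zero, not_false_eq_true, Pi.single_eq_of_ne, sub_zero, zero_ne_one,
    zero_sub, mul_neg, neg_mul]
  ring

theorem pb_eq_zero_of_gradient_relation {K H : (Fin 2 → ℝ) × (Fin 2 → ℝ) → ℝ}
    {U V : (Fin 2 → ℝ) → ℝ} {z : (Fin 2 → ℝ) × (Fin 2 → ℝ)} {dU₀ dU₁ dV₀ dV₁ : ℝ}
    (hK : ∀ z, K z = (z.1 0 * z.2 1 - z.1 1 * z.2 0) ^ 2 + U z.1)
    (hH : ∀ z, H z = z.2 0 ^ 2 + z.2 1 ^ 2 + V z.1)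
    (hU : HasFDerivAt U (dU₀ • proj 0 + dU₁ • proj 1 : (Fin 2 → ℝ) →L[ℝ] ℝ) z.1)
    (hV : HasFDerivAt V (dV₀ • proj 0 + dV₁ • proj 1 : (Fin 2 → ℝ) →L[ℝ] ℝ) z.1)
    (h₀ : dU₀ = z.1 1 * (z.1 1 * dV₀ - z.1 0 * dV₁))
    (h₁ : dU₁ = -z.1 0 * (z.1 1 * dV₀ - z.1 0 * dV₁)) :
    pb K H z = 0 := by
  obtain rfl : K = _ := funext hK
  obtain rfl : H = _ := funext hH
  rw [pb_angMom_sq_add_potential hU hV, h₀, h₁]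
  ring

noncomputable def integralPotential (b c : ℝ) (x : Fin 2 → ℝ) : ℝ :=
  4 * b * (x 0 ^ 2 * x 1 ^ 2) / (x 0 ^ 2 - x 1 ^ 2) ^ 2
    + c * (x 0 ^ 4 + x 1 ^ 4) / (x 0 ^ 2 * x 1 ^ 2)

noncomputable def hamiltonianPotential (a b c : ℝ) (x : Fin 2 → ℝ) : ℝ :=
  a * (x 0 ^ 2 + x 1 ^ 2) + b * (x 0 ^ 2 + x 1 ^ 2) / (x 0 ^ 2 - x 1 ^ 2) ^ 2
    + c * (x 0 ^ 2 + x 1 ^ 2) / (x 0 ^ 2 * x 1 ^ 2)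

variable (a b c : ℝ) {x : Fin 2 → ℝ}

theorem hasFDerivAt_integralPotential (h₀ : x 0 ≠ 0) (h₁ : x 1 ≠ 0) (h : x 0 ^ 2 ≠ x 1 ^ 2) :
    HasFDerivAt (integralPotential b c)
      ((-8 * b * x 0 * x 1 ^ 2 * (x 0 ^ 2 + x 1 ^ 2) / (x 0 ^ 2 - x 1 ^ 2) ^ 3
          + 2 * c * (x 0 / x 1 ^ 2 - x 1 ^ 2 / x 0 ^ 3)) • proj 0
        + (8 * b * x 0 ^ 2 * x 1 * (x 0 ^ 2 + x 1 ^ 2) / (x 0 ^ 2 - x 1 ^ 2) ^ 3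
          + 2 * c * (x 1 / x 0 ^ 2 - x 0 ^ 2 / x 1 ^ 3)) • proj 1 : (Fin 2 → ℝ) →L[ℝ] ℝ) x := by
  have hs := hasFDerivAt_apply (𝕜 := ℝ) 0 x
  have ht := hasFDerivAt_apply (𝕜 := ℝ) 1 x
  have hD : x 0 ^ 2 - x 1 ^ 2 ≠ 0 := sub_ne_zero.mpr h
  have hE : x 0 ^ 2 * x 1 ^ 2 ≠ 0 := by positivity
  have hderiv := ((((hs.pow 2).mul (ht.pow 2)).const_mul (4 * b)).div
      (((hs.pow 2).sub (ht.pow 2)).pow 2) (pow_ne_zero 2 hD)).add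
    ((((hs.pow 4).add (ht.pow 4)).const_mul c).div ((hs.pow 2).mul (ht.pow 2)) hE)
  refine hderiv.congr_fderiv (ContinuousLinearMap.ext fun v => ?_)
  simp only [Fin.isValue, Pi.sub_apply, Nat.add_one_sub_one, pow_one, nsmul_eq_mul, Nat.cast_ofNat, smul_add,
    Pi.mul_apply, Pi.add_apply, add_apply, smul_apply, sub_apply, proj_apply, smul_eq_mul, neg_mul]
  field_simp
  ring

theorem hasFDerivAt_hamiltonianPotential (h₀ : x 0 ≠ 0) (h₁ : x 1 ≠ 0) (h : x 0 ^ 2 ≠ x 1 ^ 2) :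
    HasFDerivAt (hamiltonianPotential a b c)
      ((2 * a * x 0 - 2 * b * x 0 * (x 0 ^ 2 + 3 * x 1 ^ 2) / (x 0 ^ 2 - x 1 ^ 2) ^ 3
          - 2 * c / x 0 ^ 3) • proj 0
        + (2 * a * x 1 + 2 * b * x 1 * (3 * x 0 ^ 2 + x 1 ^ 2) / (x 0 ^ 2 - x 1 ^ 2) ^ 3
          - 2 * c / x 1 ^ 3) • proj 1 : (Fin 2 → ℝ) →L[ℝ] ℝ) x := by
  have hs := hasFDerivAt_apply (𝕜 := ℝ) 0 x
  have ht := hasFDerivAt_apply (𝕜 := ℝ) 1 x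
  have hD : x 0 ^ 2 - x 1 ^ 2 ≠ 0 := sub_ne_zero.mpr h
  have hE : x 0 ^ 2 * x 1 ^ 2 ≠ 0 := by positivity
  have hr := (hs.pow 2).add (ht.pow 2)
  have hderiv := ((hr.const_mul a).add ((hr.const_mul b).div
      (((hs.pow 2).sub (ht.pow 2)).pow 2) (pow_ne_zero 2 hD))).add
    ((hr.const_mul c).div ((hs.pow 2).mul (ht.pow 2)) hE)
  refine hderiv.congr_fderiv (ContinuousLinearMap.ext fun v => ?_)
  simp only [Fin.isValue, Nat.add_one_sub_one, pow_one, nsmul_eq_mul, Nat.cast_ofNat, smul_add, Pi.sub_apply,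
    Pi.add_apply, Pi.mul_apply, add_apply, smul_apply, proj_apply, smul_eq_mul, sub_apply]
  field_simp
  ring

end

/-- For H = p₁² + p₂² + a(x₁²+x₂²) + b(x₁²+x₂²)/(x₁²−x₂²)² + c(x₁²+x₂²)/(x₁²x₂²), the
quantity K₂ = (x₁p₂ − x₂p₁)² + 4b x₁²x₂²/(x₁²−x₂²)² + c(x₁⁴+x₂⁴)/(x₁²x₂²) Poisson-commutes
with H on the open set where x₁x₂(x₁²−x₂²) ≠ 0. -/
theorem stmt18 (a b c : ℝ) :
    ∀ z : (Fin 2 → ℝ) × (Fin 2 → ℝ),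
      z.1 0 ≠ 0 → z.1 1 ≠ 0 → (z.1 0) ^ 2 ≠ (z.1 1) ^ 2 →
      pb
        (fun z => (z.1 0 * z.2 1 - z.1 1 * z.2 0) ^ 2
          + 4 * b * ((z.1 0) ^ 2 * (z.1 1) ^ 2) / ((z.1 0) ^ 2 - (z.1 1) ^ 2) ^ 2
          + c * ((z.1 0) ^ 4 + (z.1 1) ^ 4) / ((z.1 0) ^ 2 * (z.1 1) ^ 2))
        (fun z => (z.2 0) ^ 2 + (z.2 1) ^ 2 + a * ((z.1 0) ^ 2 + (z.1 1) ^ 2)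
          + b * ((z.1 0) ^ 2 + (z.1 1) ^ 2) / ((z.1 0) ^ 2 - (z.1 1) ^ 2) ^ 2
          + c * ((z.1 0) ^ 2 + (z.1 1) ^ 2) / ((z.1 0) ^ 2 * (z.1 1) ^ 2)) z = 0 := by
  intro z h₀ h₁ h
  refine pb_eq_zero_of_gradient_relation (U := integralPotential b c)
    (V := hamiltonianPotential a b c) (fun z => ?_) (fun z => ?_)
    (hasFDerivAt_integralPotential b c h₀ h₁ h) (hasFDerivAt_hamiltonianPotential a b c h₀ h₁ h)
    ?_ ?_
  · simp only [integralPotential]; ring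
  · simp only [hamiltonianPotential]; ring
  all_goals field_simp; ring
end
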